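/- arXiv:2307.16197 — 4 statements merged into one kernel-verified Lean document; each statement's English description precedes it below -/
import Mathlib

section
/- Let P_{ln}(t,x) = P_0(t)|x|^{2t-N} with P_0(t) = π^{-N/2} 4^{-t} Γ((N-2t)/2)/Γ(t). Then for every continuous compactly supported φ: ℝ^N → ℝ, lim_{t → 0^+} ∫_{ℝ^N} P_{ln}(t,x) φ(x) dx = φ(0). -/
open MeasureTheory Filter

noncomputable def P0 (N : ℕ) (t : ℝ) : ℝ :=
  Real.pi ^ (-(N : ℝ)/2) * (4 : ℝ) ^ (-t) * Real.Gamma (((N : ℝ) - 2*t)/2) / Real.Gamma t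

/-!
The kernel `P_0(t) ‖x‖^(2t-N)` is an approximate identity as `t → 0⁺`. In polar coordinates its
mass on the unit ball is `P_0(t) · N ω_N / (2t)`, with `ω_N` the volume of the unit ball. Since
`t Γ(t) = Γ(t+1) → 1`, we get `P_0(t) / t → π^(-N/2) Γ(N/2) = 2 / (N ω_N)`, so this mass tends
to `1`; in particular `P_0(t) → 0`, so outside any ball `B(0, δ)` the kernel, bounded by
`P_0(t) δ^(2t-N)`, tends to `0` uniformly. The peak-function theorem
`tendsto_integral_peak_smul_of_integrable_of_tendsto` then gives the limit `φ(0)`.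
-/

open Set Metric Module Topology

theorem setIntegral_ball_norm_rpow {E : Type*} [NormedAddCommGroup E] [NormedSpace ℝ E]
    [FiniteDimensional ℝ E] [MeasurableSpace E] [BorelSpace E] [Nontrivial E] (μ : Measure E)
    [μ.IsAddHaarMeasure] {p r : ℝ} (hp : -(finrank ℝ E : ℝ) < p) (hr : 0 < r) :
    ∫ x in ball (0 : E) r, ‖x‖ ^ p ∂μ =
      finrank ℝ E * μ.real (ball 0 1) * (r ^ (p + finrank ℝ E) / (p + finrank ℝ E)) := by
  have hradial : ∫ y in Ioi (0 : ℝ), y ^ (finrank ℝ E - 1) • (Iio r).indicator (· ^ p) y =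
      ∫ y in (0 : ℝ)..r, y ^ (p + finrank ℝ E - 1) := by
    have hd : 1 ≤ finrank ℝ E := finrank_pos
    rw [intervalIntegral.integral_of_le hr.le, integral_Ioc_eq_integral_Ioo,
      ← Set.indicator_smul (Iio r) (· ^ (finrank ℝ E - 1)) (· ^ p),
      setIntegral_indicator measurableSet_Iio, Ioi_inter_Iio]
    refine setIntegral_congr_fun measurableSet_Ioo fun y hy => ?_
    rw [smul_eq_mul, ← Real.rpow_natCast, ← Real.rpow_add hy.1, Nat.cast_sub hd]
    ring_nf
  rw [← integral_indicator measurableSet_ball]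
  have hindicator :
      (ball (0 : E) r).indicator (‖·‖ ^ p) = fun x => (Iio r).indicator (· ^ p) ‖x‖ := by
    ext x; simp [indicator]
  rw [hindicator, integral_fun_norm_addHaar μ, hradial, integral_rpow (Or.inl (by linarith)),
    Real.zero_rpow (by linarith), sub_add_cancel, nsmul_eq_mul, smul_eq_mul]
  ring

theorem InnerProductSpace.finrank_mul_volume_real_ball_one {E : Type*} [NormedAddCommGroup E]
    [InnerProductSpace ℝ E] [FiniteDimensional ℝ E] [MeasurableSpace E] [BorelSpace E]
    [Nontrivial E] :
    finrank ℝ E * volume.real (ball (0 : E) 1) =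
      2 * Real.pi ^ ((finrank ℝ E : ℝ) / 2) / Real.Gamma ((finrank ℝ E : ℝ) / 2) := by
  have hd : (0 : ℝ) < finrank ℝ E := Nat.cast_pos.2 finrank_pos
  have hΓ : 0 < Real.Gamma ((finrank ℝ E : ℝ) / 2) := Real.Gamma_pos_of_pos (by positivity)
  have hsqrt : √Real.pi ^ finrank ℝ E = Real.pi ^ ((finrank ℝ E : ℝ) / 2) := by
    rw [Real.sqrt_eq_rpow, ← Real.rpow_natCast, ← Real.rpow_mul Real.pi_pos.le]
    ring_nf
  rw [measureReal_def, InnerProductSpace.volume_ball, ENNReal.ofReal_one, one_pow, one_mul,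
    ENNReal.toReal_ofReal (by positivity), Real.Gamma_add_one (by positivity), hsqrt]
  field_simp

theorem Real.continuousAt_Gamma_of_pos {s : ℝ} (hs : 0 < s) : ContinuousAt Real.Gamma s :=
  (Real.differentiableAt_Gamma fun m h => by
    have : (0 : ℝ) ≤ m := m.cast_nonneg
    linarith).continuousAt

section P0

variable {N : ℕ} {t : ℝ}

theorem P0_nonneg (ht : 0 < t) (htN : 2 * t < N) : 0 ≤ P0 N t := by
  have : 0 < Real.Gamma ((N - 2 * t) / 2) := Real.Gamma_pos_of_pos (by linarith)
  have := Real.Gamma_pos_of_pos ht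
  unfold P0
  positivity

theorem P0_div_self (ht : t ≠ 0) :
    P0 N t / t = Real.pi ^ (-(N : ℝ) / 2) * 4 ^ (-t) * Real.Gamma ((N - 2 * t) / 2) /
      Real.Gamma (t + 1) := by
  rw [P0, Real.Gamma_add_one ht, div_div, mul_comm t]

theorem tendsto_P0_div_self (hN : N ≠ 0) :
    Tendsto (fun t => P0 N t / t) (𝓝[>] 0)
      (𝓝 (Real.pi ^ (-(N : ℝ) / 2) * Real.Gamma (N / 2))) := by
  have hN : (0 : ℝ) < N := by positivity
  have hcont : ContinuousAt (fun t : ℝ => Real.pi ^ (-(N : ℝ) / 2) * 4 ^ (-t) *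
      Real.Gamma ((N - 2 * t) / 2) / Real.Gamma (t + 1)) 0 := by
    have hΓN : ContinuousAt (fun t : ℝ => Real.Gamma ((N - 2 * t) / 2)) 0 :=
      (Real.continuousAt_Gamma_of_pos (by simpa using half_pos hN)).comp (by fun_prop)
    have hΓ1 : ContinuousAt (fun t : ℝ => Real.Gamma (t + 1)) 0 :=
      (Real.continuousAt_Gamma_of_pos (by simp)).comp (by fun_prop)
    exact ((continuousAt_const.mul ((Real.continuousAt_const_rpow (by norm_num)).comp
      continuousAt_neg)).mul hΓN).div hΓ1 (by simp)
  have := hcont.tendsto.mono_left (nhdsWithin_le_nhds (s := Ioi 0))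
  simp only [neg_zero, Real.rpow_zero, mul_one, mul_zero, sub_zero, zero_add, Real.Gamma_one,
    div_one] at this
  exact this.congr' (eventually_nhdsWithin_of_forall fun t ht => (P0_div_self ht.ne').symm)

theorem tendsto_P0_nhdsGT_zero (hN : N ≠ 0) : Tendsto (P0 N) (𝓝[>] 0) (𝓝 0) := by
  have := (tendsto_nhdsWithin_of_tendsto_nhds tendsto_id).mul (tendsto_P0_div_self hN)
  rw [zero_mul] at this
  exact this.congr' (eventually_nhdsWithin_of_forall fun t ht => mul_div_cancel₀ _ ht.ne')

end P0

/-- The kernel of the Riesz potential `(-Δ)^(-t)` on a space of dimension `d`; in the paper's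
notation it is `P_ln(t, x) = P_0(t) |x|^(2t - d)`. -/
noncomputable def rieszKernel {E : Type*} [NormedAddCommGroup E] [NormedSpace ℝ E] (t : ℝ)
    (x : E) : ℝ :=
  P0 (finrank ℝ E) t * ‖x‖ ^ (2 * t - finrank ℝ E)

theorem tendstoUniformlyOn_rieszKernel_compl {E : Type*} [NormedAddCommGroup E]
    [NormedSpace ℝ E] [FiniteDimensional ℝ E] [Nontrivial E] {u : Set E} (hu : u ∈ 𝓝 0) :
    TendstoUniformlyOn (rieszKernel (E := E)) 0 (𝓝[>] 0) uᶜ := by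
  have hd : (0 : ℝ) < finrank ℝ E := Nat.cast_pos.2 finrank_pos
  obtain ⟨δ, hδ, hball⟩ := Metric.mem_nhds_iff.1 hu
  have hbound : Tendsto (fun t => P0 (finrank ℝ E) t * δ ^ (2 * t - finrank ℝ E)) (𝓝[>] 0)
      (𝓝 0) := by
    have hpow : ContinuousAt (fun t : ℝ => δ ^ (2 * t - finrank ℝ E)) 0 :=
      continuousAt_const.rpow (by fun_prop) (Or.inl hδ.ne')
    simpa using (tendsto_P0_nhdsGT_zero finrank_pos.ne').mul
      (hpow.tendsto.mono_left nhdsWithin_le_nhds)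
  rw [Metric.tendstoUniformlyOn_iff]
  intro ε hε
  filter_upwards [hbound.eventually (gt_mem_nhds hε), Ioo_mem_nhdsGT (half_pos hd)]
    with t hεt ht x hx
  have hδx : δ ≤ ‖x‖ := by
    simpa using fun h : x ∈ ball 0 δ => hx (hball h)
  have hP0 : 0 ≤ P0 (finrank ℝ E) t := P0_nonneg ht.1 (by linarith [ht.2])
  rw [Pi.zero_apply, dist_zero_left, rieszKernel, Real.norm_eq_abs,
    abs_of_nonneg (mul_nonneg hP0 (by positivity))]
  calc P0 (finrank ℝ E) t * ‖x‖ ^ (2 * t - finrank ℝ E)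
      ≤ P0 (finrank ℝ E) t * δ ^ (2 * t - finrank ℝ E) :=
        mul_le_mul_of_nonneg_left (Real.rpow_le_rpow_of_nonpos hδ hδx (by linarith [ht.2])) hP0
    _ < ε := hεt

section Kernel

variable {E : Type*} [NormedAddCommGroup E] [InnerProductSpace ℝ E] [FiniteDimensional ℝ E]
  [MeasurableSpace E] [BorelSpace E] [Nontrivial E]

theorem tendsto_setIntegral_ball_one_rieszKernel :
    Tendsto (fun t => ∫ x in ball (0 : E) 1, rieszKernel t x) (𝓝[>] 0) (𝓝 1) := by
  have hd : finrank ℝ E ≠ 0 := finrank_pos.ne'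
  have hΓ : 0 < Real.Gamma ((finrank ℝ E : ℝ) / 2) := Real.Gamma_pos_of_pos (by positivity)
  have hπ : Real.pi ^ (-(finrank ℝ E : ℝ) / 2) * Real.pi ^ ((finrank ℝ E : ℝ) / 2) = 1 := by
    rw [← Real.rpow_add Real.pi_pos, neg_div, neg_add_cancel, Real.rpow_zero]
  have hlim := (tendsto_P0_div_self hd).mul_const
    (finrank ℝ E * volume.real (ball (0 : E) 1) / 2)
  have hval : Real.pi ^ (-(finrank ℝ E : ℝ) / 2) * Real.Gamma ((finrank ℝ E : ℝ) / 2) *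
      (finrank ℝ E * volume.real (ball (0 : E) 1) / 2) = 1 := by
    rw [InnerProductSpace.finrank_mul_volume_real_ball_one]
    field_simp
    rw [neg_div] at hπ
    linear_combination hπ
  rw [hval] at hlim
  refine hlim.congr' (eventually_nhdsWithin_of_forall fun t (ht : 0 < t) => ?_)
  have hp : 2 * t - finrank ℝ E + finrank ℝ E = 2 * t := sub_add_cancel _ _
  simp only [rieszKernel]
  rw [integral_const_mul, setIntegral_ball_norm_rpow volume (by linarith) one_pos, hp,
    Real.one_rpow]
  field_simp

theorem tendsto_integral_rieszKernel_smul {F : Type*} [NormedAddCommGroup F]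
    [NormedSpace ℝ F] [CompleteSpace F] {g : E → F} (hg : Integrable g) (hg0 : ContinuousAt g 0) :
    Tendsto (fun t => ∫ x, rieszKernel t x • g x) (𝓝[>] 0) (𝓝 (g 0)) := by
  have hd : (0 : ℝ) < finrank ℝ E := Nat.cast_pos.2 finrank_pos
  have hnonneg : ∀ᶠ t in 𝓝[>] (0 : ℝ), ∀ x : E, 0 ≤ rieszKernel t x := by
    filter_upwards [Ioo_mem_nhdsGT (half_pos hd)] with t ht x
    exact mul_nonneg (P0_nonneg ht.1 (by linarith [ht.2])) (by positivity)
  exact tendsto_integral_peak_smul_of_integrable_of_tendsto measurableSet_ball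
    (ball_mem_nhds 0 one_pos) measure_ball_lt_top.ne hnonneg
    (fun u hu h0 => tendstoUniformlyOn_rieszKernel_compl (hu.mem_nhds h0))
    tendsto_setIntegral_ball_one_rieszKernel
    (Eventually.of_forall fun t =>
      ((measurable_norm.pow_const _).const_mul _).aestronglyMeasurable) hg hg0

end Kernel

theorem stmt7 (N : ℕ) (hN : 1 ≤ N) (φ : EuclideanSpace ℝ (Fin N) → ℝ)
    (hφc : Continuous φ) (hφs : HasCompactSupport φ) :
    Tendsto (fun t : ℝ => ∫ x : EuclideanSpace ℝ (Fin N),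
        P0 N t * ‖x‖ ^ (2*t - (N : ℝ)) * φ x)
      (nhdsWithin 0 (Set.Ioi 0)) (nhds (φ 0)) := by
  have : Nonempty (Fin N) := ⟨⟨0, hN⟩⟩
  have h := tendsto_integral_rieszKernel_smul (hφc.integrable_of_hasCompactSupport hφs)
    hφc.continuousAt
  simpa only [rieszKernel, finrank_euclideanSpace_fin, smul_eq_mul] using h
end

section
/- Let u* (x) = ∫_0^1 P_0(t) |x|^{2t-N} dt where P_0(t) = π^{-N/2} 4^{-t} Γ((N-2t)/2)/Γ(t), for N ≥ 3. Then there is a constant c > 0 such that for all x with 0 < |x| < 1/e, |u*(x) - (Γ(N/2)/(4π^{N/2})) |x|^{-N}/(ln|x|)²| ≤ c |x|^{-N}/|ln|x||³. -/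
open MeasureTheory

noncomputable def uStar (N : ℕ) (x : EuclideanSpace ℝ (Fin N)) : ℝ :=
  ∫ t in Set.Ioc (0 : ℝ) 1, P0 N t * ‖x‖ ^ (2*t - (N : ℝ))

/-!
Write `P0 N t = t * φ t` with `φ t = π^(-N/2) 4^(-t) Γ((N - 2t)/2) / Γ(t + 1)`, which is smooth on
`(-1, N/2) ⊇ [0, 1]` and hence `K`-Lipschitz on `[0, 1]` for some `K`, with
`φ 0 = Γ(N/2) / π^(N/2)`. With `b = -2 log |x| > 2` the integrand is `|x|^(-N) t φ(t) e^(-b t)`,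
and a Watson-type estimate gives `∫₀¹ t φ(t) e^(-b t) dt = φ(0) / b² + O(1 / b³)`: replacing
`φ(t)` by `φ(0)` costs `K ∫ t² e^(-b t) ≤ 2K / b³`, and extending `∫₀¹ t e^(-b t) dt` to
`(0, ∞)`, where it equals `1 / b²`, costs at most `∫₁^∞ t² e^(-b t) dt ≤ 2 / b³`.
-/

open Set Real

theorem Real.contDiffAt_Gamma {n : WithTop ℕ∞} {x : ℝ} (hx : 0 < x) :
    ContDiffAt ℝ n Gamma x := by
  have hU : IsOpen {s : ℂ | 0 < s.re} := isOpen_lt continuous_const Complex.continuous_re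
  have hdiff : DifferentiableOn ℂ Complex.Gamma {s : ℂ | 0 < s.re} := by
    refine fun s hs => (Complex.differentiableAt_Gamma s fun m hm => ?_).differentiableWithinAt
    have : s.re ≤ 0 := by simp [hm]
    exact lt_irrefl _ (hs.trans_le this)
  have hA : AnalyticAt ℂ Complex.Gamma (x : ℂ) :=
    hdiff.analyticAt (hU.mem_nhds (by simpa using hx))
  have hℂ : ContDiffAt ℝ n (fun y : ℝ => (Complex.Gamma y).re) x :=
    Complex.reCLM.contDiff.contDiffAt.comp x
      ((hA.contDiffAt.restrict_scalars ℝ).comp x Complex.ofRealCLM.contDiff.contDiffAt)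
  exact hℂ.congr_of_eventuallyEq (.of_forall fun y => by simp [Complex.Gamma_ofReal])

lemma integrableOn_pow_mul_exp_neg_mul_Ioi (n : ℕ) {b : ℝ} (hb : 0 < b) :
    IntegrableOn (fun t : ℝ => t ^ n * exp (-(b * t))) (Ioi 0) := by
  refine (integrableOn_rpow_mul_exp_neg_mul_rpow (s := n) (p := 1)
    (neg_one_lt_zero.trans_le n.cast_nonneg) zero_lt_one hb).congr_fun (fun t _ => ?_)
    measurableSet_Ioi
  simp

lemma integral_pow_mul_exp_neg_mul_Ioi (n : ℕ) {b : ℝ} (hb : 0 < b) :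
    ∫ t in Ioi (0 : ℝ), t ^ n * exp (-(b * t)) = n.factorial / b ^ (n + 1) := by
  have h := integral_rpow_mul_exp_neg_mul_Ioi (a := n + 1) (by positivity) hb
  simp only [add_sub_cancel_right, rpow_natCast, Gamma_nat_eq_factorial] at h
  rw [h, ← Nat.cast_succ, rpow_natCast, one_div_pow]
  field_simp

lemma setIntegral_sq_mul_exp_neg_mul_le {s : Set ℝ} (hs : s ⊆ Ioi 0) {b : ℝ} (hb : 0 < b) :
    ∫ t in s, t ^ 2 * exp (-(b * t)) ≤ 2 / b ^ 3 := by
  calc ∫ t in s, t ^ 2 * exp (-(b * t)) ≤ ∫ t in Ioi 0, t ^ 2 * exp (-(b * t)) :=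
        setIntegral_mono_set (integrableOn_pow_mul_exp_neg_mul_Ioi 2 hb)
          (.of_forall fun t => by positivity) hs.eventuallyLE
    _ = 2 / b ^ 3 := by norm_num [integral_pow_mul_exp_neg_mul_Ioi 2 hb]

lemma abs_integral_Ioi_one_mul_exp_neg_mul_le {b : ℝ} (hb : 0 < b) :
    |∫ t in Ioi (1 : ℝ), t * exp (-(b * t))| ≤ 2 / b ^ 3 := by
  have hsub : Ioi (1 : ℝ) ⊆ Ioi 0 := Ioi_subset_Ioi zero_le_one
  rw [abs_of_nonneg (setIntegral_nonneg measurableSet_Ioi fun t ht =>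
    mul_nonneg (zero_le_one.trans ht.le) (exp_nonneg _))]
  refine le_trans (setIntegral_mono_on ?_ ?_ measurableSet_Ioi fun t ht => ?_)
    (setIntegral_sq_mul_exp_neg_mul_le hsub hb)
  · simpa using (integrableOn_pow_mul_exp_neg_mul_Ioi 1 hb).mono_set hsub
  · exact (integrableOn_pow_mul_exp_neg_mul_Ioi 2 hb).mono_set hsub
  · have ht : (1 : ℝ) < t := ht
    gcongr
    nlinarith

lemma abs_integral_mul_sub_mul_exp_neg_mul_le {φ : ℝ → ℝ} {K : NNReal}
    (hφ : LipschitzOnWith K φ (Icc 0 1)) {b : ℝ} (hb : 0 < b) :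
    |∫ t in Ioc (0 : ℝ) 1, t * (φ t - φ 0) * exp (-(b * t))| ≤ K * (2 / b ^ 3) := by
  have hsub : Ioc (0 : ℝ) 1 ⊆ Ioi 0 := Ioc_subset_Ioi_self
  have hbound : ∀ t ∈ Ioc (0 : ℝ) 1,
      ‖t * (φ t - φ 0) * exp (-(b * t))‖ ≤ K * (t ^ 2 * exp (-(b * t))) := by
    intro t ht
    have hLip : |φ t - φ 0| ≤ K * t := by
      simpa [dist_eq_norm, abs_of_pos ht.1] using
        hφ.dist_le_mul t (Ioc_subset_Icc_self ht) 0 (left_mem_Icc.2 zero_le_one)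
    rw [norm_mul, norm_mul, norm_of_nonneg ht.1.le, norm_of_nonneg (exp_nonneg _),
      Real.norm_eq_abs]
    calc t * |φ t - φ 0| * exp (-(b * t)) ≤ t * (K * t) * exp (-(b * t)) := by
          gcongr; exact ht.1.le
      _ = K * (t ^ 2 * exp (-(b * t))) := by ring
  calc |∫ t in Ioc (0 : ℝ) 1, t * (φ t - φ 0) * exp (-(b * t))|
      ≤ ∫ t in Ioc (0 : ℝ) 1, K * (t ^ 2 * exp (-(b * t))) :=
        norm_integral_le_of_norm_le
          (((integrableOn_pow_mul_exp_neg_mul_Ioi 2 hb).mono_set hsub).const_mul _)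
          ((ae_restrict_iff' measurableSet_Ioc).2 (.of_forall hbound))
    _ ≤ K * (2 / b ^ 3) := by
        rw [integral_const_mul]
        gcongr
        exact setIntegral_sq_mul_exp_neg_mul_le hsub hb

theorem abs_integral_mul_exp_neg_mul_sub_le {φ : ℝ → ℝ} {K : NNReal}
    (hφ : LipschitzOnWith K φ (Icc 0 1)) {b : ℝ} (hb : 0 < b) :
    |(∫ t in Ioc (0 : ℝ) 1, t * φ t * exp (-(b * t))) - φ 0 / b ^ 2| ≤ 2 * (K + |φ 0|) / b ^ 3 := by
  have hInt : IntegrableOn (fun t : ℝ => t * exp (-(b * t))) (Ioi 0) := by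
    simpa using integrableOn_pow_mul_exp_neg_mul_Ioi 1 hb
  have hInt₁ : IntegrableOn (fun t : ℝ => t * exp (-(b * t))) (Ioc 0 1) :=
    hInt.mono_set Ioc_subset_Ioi_self
  have hφInt : IntegrableOn (fun t : ℝ => t * φ t * exp (-(b * t))) (Ioc 0 1) :=
    ((continuousOn_id.mul hφ.continuousOn).mul (by fun_prop)).integrableOn_compact
      isCompact_Icc |>.mono_set Ioc_subset_Icc_self
  have hsplit : ∫ t in Ioc (0 : ℝ) 1, t * exp (-(b * t))
      = 1 / b ^ 2 - ∫ t in Ioi (1 : ℝ), t * exp (-(b * t)) := by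
    have h := integral_pow_mul_exp_neg_mul_Ioi 1 hb
    simp only [pow_one, Nat.factorial_one, Nat.cast_one, one_add_one_eq_two] at h
    rw [← h, ← Ioc_union_Ioi_eq_Ioi zero_le_one, setIntegral_union (Ioc_disjoint_Ioi le_rfl)
      measurableSet_Ioi hInt₁ (hInt.mono_set (Ioi_subset_Ioi zero_le_one))]
    ring
  have hdecomp : (∫ t in Ioc (0 : ℝ) 1, t * φ t * exp (-(b * t))) - φ 0 / b ^ 2
      = (∫ t in Ioc (0 : ℝ) 1, t * (φ t - φ 0) * exp (-(b * t)))
        - φ 0 * ∫ t in Ioi (1 : ℝ), t * exp (-(b * t)) := by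
    have : ∀ t, t * (φ t - φ 0) * exp (-(b * t))
        = t * φ t * exp (-(b * t)) - φ 0 * (t * exp (-(b * t))) := fun t => by ring
    simp_rw [this]
    rw [integral_sub hφInt (hInt₁.const_mul (φ 0)), integral_const_mul, hsplit]
    ring
  rw [hdecomp]
  calc _ ≤ |∫ t in Ioc (0 : ℝ) 1, t * (φ t - φ 0) * exp (-(b * t))|
        + |φ 0| * |∫ t in Ioi (1 : ℝ), t * exp (-(b * t))| :=
        (abs_sub _ _).trans_eq (by rw [abs_mul])
    _ ≤ K * (2 / b ^ 3) + |φ 0| * (2 / b ^ 3) := by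
        gcongr
        exacts [abs_integral_mul_sub_mul_exp_neg_mul_le hφ hb,
          abs_integral_Ioi_one_mul_exp_neg_mul_le hb]
    _ = 2 * (K + |φ 0|) / b ^ 3 := by ring

noncomputable def P0Reg (N : ℕ) (t : ℝ) : ℝ :=
  π ^ (-(N : ℝ) / 2) * (4 : ℝ) ^ (-t) * Gamma (((N : ℝ) - 2 * t) / 2) / Gamma (t + 1)

lemma P0_eq_mul_P0Reg (N : ℕ) {t : ℝ} (ht : 0 < t) : P0 N t = t * P0Reg N t := by
  rw [P0, P0Reg, Gamma_add_one ht.ne']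
  field_simp [(Gamma_pos_of_pos ht).ne']

lemma P0Reg_zero (N : ℕ) : P0Reg N 0 = Gamma ((N : ℝ) / 2) / π ^ ((N : ℝ) / 2) := by
  rw [P0Reg, neg_div, rpow_neg pi_pos.le]
  simp [div_eq_inv_mul]

lemma contDiffOn_P0Reg (N : ℕ) {n : WithTop ℕ∞} :
    ContDiffOn ℝ n (P0Reg N) (Ioo (-1) ((N : ℝ) / 2)) := by
  rintro t ⟨ht₁, ht₂⟩
  have hΓ₁ : ContDiffAt ℝ n (fun t : ℝ => Gamma (((N : ℝ) - 2 * t) / 2)) t :=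
    (contDiffAt_Gamma (by linarith)).comp t (by fun_prop)
  have hΓ₂ : ContDiffAt ℝ n (fun t : ℝ => Gamma (t + 1)) t :=
    (contDiffAt_Gamma (by linarith)).comp t (by fun_prop)
  have h4 : ContDiffAt ℝ n (fun t : ℝ => (4 : ℝ) ^ (-t)) t := by fun_prop (disch := norm_num)
  exact ((contDiffAt_const.mul h4).mul hΓ₁ |>.div hΓ₂
    (Gamma_pos_of_pos (by linarith)).ne').contDiffWithinAt

lemma exists_lipschitzOnWith_P0Reg {N : ℕ} (hN : 3 ≤ N) :
    ∃ K, LipschitzOnWith K (P0Reg N) (Icc 0 1) := by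
  have hN' : (3 : ℝ) ≤ N := by exact_mod_cast hN
  refine ((contDiffOn_P0Reg N (n := 1)).mono fun t ht => ?_).exists_lipschitzOnWith one_ne_zero
    (convex_Icc 0 1) isCompact_Icc
  exact ⟨by linarith [ht.1], by linarith [ht.2]⟩

lemma uStar_eq (N : ℕ) {x : EuclideanSpace ℝ (Fin N)} (hx : 0 < ‖x‖) :
    uStar N x = ‖x‖ ^ (-(N : ℝ)) *
      ∫ t in Ioc (0 : ℝ) 1, t * P0Reg N t * exp (-(-2 * log ‖x‖ * t)) := by
  rw [uStar, ← integral_const_mul]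
  refine setIntegral_congr_fun measurableSet_Ioc fun t ht => ?_
  rw [P0_eq_mul_P0Reg N ht.1, sub_eq_add_neg, rpow_add hx, rpow_def_of_pos hx]
  ring_nf

lemma uStar_sub_eq (N : ℕ) {x : EuclideanSpace ℝ (Fin N)} (hx : 0 < ‖x‖) :
    uStar N x - Gamma ((N : ℝ) / 2) / (4 * π ^ ((N : ℝ) / 2)) * (‖x‖ ^ (-(N : ℝ)) / log ‖x‖ ^ 2)
      = ‖x‖ ^ (-(N : ℝ)) * ((∫ t in Ioc (0 : ℝ) 1, t * P0Reg N t * exp (-(-2 * log ‖x‖ * t)))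
        - P0Reg N 0 / (-2 * log ‖x‖) ^ 2) := by
  rw [uStar_eq N hx, P0Reg_zero]
  ring

theorem stmt12 (N : ℕ) (hN : 3 ≤ N) :
    ∃ c : ℝ, 0 < c ∧ ∀ x : EuclideanSpace ℝ (Fin N), 0 < ‖x‖ → ‖x‖ < (Real.exp 1)⁻¹ →
      |uStar N x - (Real.Gamma ((N : ℝ)/2) / (4 * Real.pi ^ ((N : ℝ)/2))) *
          (‖x‖ ^ (-(N : ℝ)) / (Real.log ‖x‖)^2)|
        ≤ c * ‖x‖ ^ (-(N : ℝ)) / |Real.log ‖x‖|^3 := by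
  obtain ⟨K, hK⟩ := exists_lipschitzOnWith_P0Reg hN
  have hφ₀ : 0 < P0Reg N 0 := by
    rw [P0Reg_zero]
    have : (0 : ℝ) < N / 2 := by positivity
    positivity
  refine ⟨(K + P0Reg N 0) / 4, by positivity, fun x hx₀ hx₁ => ?_⟩
  have hlog : log ‖x‖ < -1 := by simpa using log_lt_log hx₀ hx₁
  have hest := abs_integral_mul_exp_neg_mul_sub_le hK (by linarith : 0 < -2 * log ‖x‖)
  rw [abs_of_pos hφ₀] at hest
  have hrN : 0 < ‖x‖ ^ (-(N : ℝ)) := rpow_pos_of_pos hx₀ _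
  rw [uStar_sub_eq N hx₀, abs_mul, abs_of_pos hrN]
  calc _ ≤ ‖x‖ ^ (-(N : ℝ)) * (2 * (K + P0Reg N 0) / (-2 * log ‖x‖) ^ 3) := by gcongr
    _ = (K + P0Reg N 0) / 4 * ‖x‖ ^ (-(N : ℝ)) / |log ‖x‖| ^ 3 := by
        rw [abs_of_neg (by linarith : log ‖x‖ < 0)]
        field_simp
        ring
end

section
/- Let N ≥ 3 and u*(x) = ∫_0^1 P_0(t) |x|^{2t-N} dt with P_0(t) = π^{-N/2} 4^{-t} Γ((N-2t)/2)/Γ(t). Then there exists c > 0 such that for all |x| > 1, 0 < u*(x) ≤ c(|x|^{2-N}/ln|x| + |x|^{-N}/(ln|x|)²). -/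
open MeasureTheory

/-!
For `t ∈ (0, 1]` the weight `P0 N t` is positive and bounded: `1 / Γ` is entire (so the pole of
`Γ` at `0` only makes `P0 N t → 0`), and `(N - 2t)/2 ≥ 1/2` stays away from the poles of `Γ`.
Hence `0 < u*(x) ≤ C ∫₀¹ |x|^(2t-N) dt = C (|x|^(2-N) - |x|^(-N)) / (2 ln |x|)`,
which is at most `(C/2) |x|^(2-N) / ln |x|`.
-/

open Set Real

theorem Real.continuous_inv_Gamma : Continuous fun t : ℝ => (Gamma t)⁻¹ := by
  have h : (fun t : ℝ => (Gamma t)⁻¹) = fun t : ℝ => ((Complex.Gamma t)⁻¹).re := by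
    funext t
    rw [Complex.Gamma_ofReal, ← Complex.ofReal_inv, Complex.ofReal_re]
  rw [h]
  exact Complex.continuous_re.comp
    (Complex.differentiable_one_div_Gamma.continuous.comp Complex.continuous_ofReal)

theorem Real.integral_rpow_two_mul_sub {r : ℝ} (hr : 0 < r) (hr1 : r ≠ 1) (a : ℝ) :
    ∫ t in (0 : ℝ)..1, r ^ (2 * t - a) = (r ^ (2 - a) - r ^ (-a)) / (2 * log r) := by
  have hlog : log r ≠ 0 := log_ne_zero_of_pos_of_ne_one hr hr1
  have hderiv : ∀ t : ℝ,
      HasDerivAt (fun s => r ^ (2 * s - a) / (2 * log r)) (r ^ (2 * t - a)) t := by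
    intro t
    refine ((((hasDerivAt_id' t).const_mul 2).sub_const a).const_rpow hr).div_const
      (2 * log r) |>.congr_deriv ?_
    field_simp
  have hcont : Continuous fun t : ℝ => r ^ (2 * t - a) :=
    continuous_const.rpow (by fun_prop) fun _ => Or.inl hr.ne'
  rw [intervalIntegral.integral_eq_sub_of_hasDerivAt (fun t _ => hderiv t)
    (hcont.intervalIntegrable 0 1), mul_one, mul_zero, zero_sub, sub_div]

theorem Real.integral_rpow_two_mul_sub_le {r : ℝ} (hr : 1 < r) (a : ℝ) :
    ∫ t in (0 : ℝ)..1, r ^ (2 * t - a) ≤ r ^ (2 - a) / (2 * log r) := by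
  have hlog : 0 < 2 * log r := by linarith [log_pos hr]
  rw [integral_rpow_two_mul_sub (by linarith) hr.ne' a]
  gcongr
  exact sub_le_self _ (rpow_nonneg (by linarith) _)

theorem continuousOn_P0 (N : ℕ) : ContinuousOn (P0 N) (Iio ((N : ℝ) / 2)) := by
  have hΓ : ContinuousOn (fun t : ℝ => Gamma (((N : ℝ) - 2 * t) / 2)) (Iio ((N : ℝ) / 2)) :=
    differentiableOn_Gamma_Ioi.continuousOn.comp (by fun_prop) fun t (ht : t < N / 2) => by
      simp only [mem_Ioi]; linarith
  have h4 : Continuous fun t : ℝ => (4 : ℝ) ^ (-t) :=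
    continuous_const.rpow continuous_neg fun _ => Or.inl four_ne_zero
  have hP0 : P0 N = fun t => π ^ (-(N : ℝ) / 2) * 4 ^ (-t) * Gamma (((N : ℝ) - 2 * t) / 2) *
      (Gamma t)⁻¹ :=
    funext fun t => div_eq_mul_inv _ _
  rw [hP0]
  exact ((continuousOn_const.mul h4.continuousOn).mul hΓ).mul continuous_inv_Gamma.continuousOn

theorem P0_pos {N : ℕ} {t : ℝ} (ht : 0 < t) (htN : t < N / 2) : 0 < P0 N t := by
  have hΓ : 0 < Gamma (((N : ℝ) - 2 * t) / 2) := Gamma_pos_of_pos (by linarith)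
  have hΓt : 0 < Gamma t := Gamma_pos_of_pos ht
  unfold P0
  positivity

theorem Icc_zero_one_subset_Iio_half {N : ℕ} (hN : 3 ≤ N) : Icc (0 : ℝ) 1 ⊆ Iio ((N : ℝ) / 2) :=
  fun t ht => by
    have : (3 : ℝ) ≤ N := by exact_mod_cast hN
    simp only [mem_Iio]; linarith [ht.2]

theorem exists_pos_bound_P0 {N : ℕ} (hN : 3 ≤ N) :
    ∃ C, 0 < C ∧ ∀ t ∈ Icc (0 : ℝ) 1, P0 N t ≤ C := by
  obtain ⟨C, hC⟩ := isCompact_Icc.exists_bound_of_continuousOn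
    ((continuousOn_P0 N).mono (Icc_zero_one_subset_Iio_half hN))
  have hP01 : 0 < P0 N 1 :=
    P0_pos one_pos (Icc_zero_one_subset_Iio_half hN ⟨zero_le_one, le_rfl⟩)
  exact ⟨C, hP01.trans_le ((le_abs_self _).trans (hC 1 ⟨zero_le_one, le_rfl⟩)),
    fun t ht => (le_abs_self _).trans (hC t ht)⟩

theorem continuousOn_P0_mul_rpow (N : ℕ) {r : ℝ} (hr : 0 < r) :
    ContinuousOn (fun t => P0 N t * r ^ (2 * t - (N : ℝ))) (Iio ((N : ℝ) / 2)) :=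
  (continuousOn_P0 N).mul
    (continuous_const.rpow (by fun_prop) fun _ => Or.inl hr.ne').continuousOn

theorem uStar_eq_intervalIntegral (N : ℕ) (x : EuclideanSpace ℝ (Fin N)) :
    uStar N x = ∫ t in (0 : ℝ)..1, P0 N t * ‖x‖ ^ (2 * t - (N : ℝ)) :=
  (intervalIntegral.integral_of_le zero_le_one).symm

theorem intervalIntegrable_P0_mul_rpow {N : ℕ} (hN : 3 ≤ N) {r : ℝ} (hr : 0 < r) :
    IntervalIntegrable (fun t => P0 N t * r ^ (2 * t - (N : ℝ))) volume 0 1 :=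
  ((continuousOn_P0_mul_rpow N hr).mono
    (by simpa [uIcc_of_le zero_le_one] using Icc_zero_one_subset_Iio_half hN)).intervalIntegrable

theorem uStar_pos {N : ℕ} (hN : 3 ≤ N) {x : EuclideanSpace ℝ (Fin N)} (hx : x ≠ 0) :
    0 < uStar N x := by
  have hr : 0 < ‖x‖ := norm_pos_iff.2 hx
  rw [uStar_eq_intervalIntegral]
  refine intervalIntegral.intervalIntegral_pos_of_pos_on (intervalIntegrable_P0_mul_rpow hN hr)
    (fun t ht => mul_pos ?_ (rpow_pos_of_pos hr _)) zero_lt_one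
  exact P0_pos ht.1 (Icc_zero_one_subset_Iio_half hN (Ioo_subset_Icc_self ht))

theorem uStar_le {N : ℕ} (hN : 3 ≤ N) {C : ℝ} (hC : ∀ t ∈ Icc (0 : ℝ) 1, P0 N t ≤ C)
    {x : EuclideanSpace ℝ (Fin N)} (hx : 1 < ‖x‖) :
    uStar N x ≤ C / 2 * (‖x‖ ^ (2 - (N : ℝ)) / log ‖x‖) := by
  have hr : 0 < ‖x‖ := one_pos.trans hx
  have hC0 : 0 ≤ C := (P0_pos one_pos (Icc_zero_one_subset_Iio_half hN
    ⟨zero_le_one, le_rfl⟩)).le.trans (hC 1 ⟨zero_le_one, le_rfl⟩)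
  have hrpow : Continuous fun t : ℝ => ‖x‖ ^ (2 * t - (N : ℝ)) :=
    continuous_const.rpow (by fun_prop) fun _ => Or.inl hr.ne'
  rw [uStar_eq_intervalIntegral]
  calc ∫ t in (0 : ℝ)..1, P0 N t * ‖x‖ ^ (2 * t - (N : ℝ))
      ≤ ∫ t in (0 : ℝ)..1, C * ‖x‖ ^ (2 * t - (N : ℝ)) :=
        intervalIntegral.integral_mono_on zero_le_one (intervalIntegrable_P0_mul_rpow hN hr)
          ((continuous_const.mul hrpow).intervalIntegrable 0 1)
          fun t ht => mul_le_mul_of_nonneg_right (hC t ht) (rpow_nonneg hr.le _)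
    _ = C * ∫ t in (0 : ℝ)..1, ‖x‖ ^ (2 * t - (N : ℝ)) := intervalIntegral.integral_const_mul _ _
    _ ≤ C * (‖x‖ ^ (2 - (N : ℝ)) / (2 * log ‖x‖)) := by
        gcongr
        exact integral_rpow_two_mul_sub_le hx _
    _ = C / 2 * (‖x‖ ^ (2 - (N : ℝ)) / log ‖x‖) := by ring

theorem stmt13 (N : ℕ) (hN : 3 ≤ N) :
    ∃ c : ℝ, 0 < c ∧ ∀ x : EuclideanSpace ℝ (Fin N), 1 < ‖x‖ →
      0 < uStar N x ∧
      uStar N x ≤ c * (‖x‖ ^ (2 - (N : ℝ)) / Real.log ‖x‖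
          + ‖x‖ ^ (-(N : ℝ)) / (Real.log ‖x‖)^2) := by
  obtain ⟨C, hC0, hC⟩ := exists_pos_bound_P0 hN
  refine ⟨C / 2, by positivity, fun x hx => ⟨uStar_pos hN (norm_pos_iff.1 (one_pos.trans hx)), ?_⟩⟩
  calc uStar N x ≤ C / 2 * (‖x‖ ^ (2 - (N : ℝ)) / log ‖x‖) := uStar_le hN hC hx
    _ ≤ _ := by
        gcongr
        exact le_add_of_nonneg_right (by positivity)
end

section
/- Let M: [0,∞) → [0,∞) be a C¹ increasing function with M(0)=0 satisfying ∫_2^∞ M(t)/(t² ln² t) dt < ∞, and let g: B_1 → [0,∞) be measurable with g(x) ≤ c₀ |x|^{-N}/(1 + ln²|x|) for 0 < |x| < 1 and some c₀ > 0. Then ∫_{B_1} M(g(x)) dx < ∞. -/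
open MeasureTheory

/-!
In polar coordinates, and since `M` is monotone, it suffices that `r ^ (N - 1) * M (φ r)` is
integrable on `(0, 1)`, where `φ r = c₀ r⁻ᴺ / (1 + log² r)`. Away from `0` this function is
continuous. Near `0`, `φ` decreases onto a neighbourhood of `∞`, and the substitution `s = φ r`
compares the integrand with `M s / (s² log² s)`: indeed `|φ'| / φ² = r ^ (N - 1) D / c₀` with
`D = N (1 + log² r) + 2 log r ≈ N log² r`, while `log φ r ≈ N |log r|`.
-/

open Set Filter Topology Real

theorem integrableOn_of_norm_le_abs_deriv_mul_comp {E : Type*} [NormedAddCommGroup E]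
    {s : Set ℝ} (hs : MeasurableSet s) {φ φ' : ℝ → ℝ}
    (hφ' : ∀ x ∈ s, HasDerivWithinAt φ (φ' x) s x) (hφ : InjOn φ s) {h : ℝ → ℝ}
    (hh : IntegrableOn h (φ '' s)) {k : ℝ → E} (hk : AEStronglyMeasurable k (volume.restrict s))
    (C : ℝ) (hkh : ∀ x ∈ s, ‖k x‖ ≤ C * (|φ' x| * h (φ x))) : IntegrableOn k s := by
  have hcomp := (integrableOn_image_iff_integrableOn_abs_deriv_smul hs hφ' hφ h).mp hh
  refine Integrable.mono' (hcomp.const_mul C) hk ?_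
  filter_upwards [ae_restrict_mem hs] with x hx
  simpa only [smul_eq_mul] using hkh x hx

noncomputable def logDampedInvPow (N : ℕ) (c r : ℝ) : ℝ :=
  c * r ^ (-(N : ℝ)) / (1 + log r ^ 2)

section logDampedInvPow

variable {N : ℕ} {c r : ℝ}

theorem hasDerivAt_logDampedInvPow (hr : 0 < r) :
    HasDerivAt (logDampedInvPow N c)
      (-logDampedInvPow N c r * (N * (1 + log r ^ 2) + 2 * log r) / (r * (1 + log r ^ 2))) r := by
  have hpow := (hasDerivAt_rpow_const (p := -(N : ℝ)) (Or.inl hr.ne')).const_mul c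
  have hden : HasDerivAt (fun x => 1 + log x ^ 2) (2 * log r * r⁻¹) r := by
    simpa using ((hasDerivAt_log hr.ne').pow 2).const_add 1
  refine (hpow.div hden (by positivity)).congr_deriv ?_
  rw [rpow_sub_one hr.ne']
  unfold logDampedInvPow
  field_simp
  ring

theorem log_sq_logDampedInvPow_le (hN : 1 ≤ N) (hc : 0 < c) (hr : 0 < r) (hr4 : log r ≤ -4)
    (hrc : |log c| ≤ -log r) (hφ : 1 ≤ logDampedInvPow N c r) :
    log (logDampedInvPow N c r) ^ 2 ≤ 8 * N * (N * (1 + log r ^ 2) + 2 * log r) := by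
  have hN' : (1 : ℝ) ≤ N := by exact_mod_cast hN
  have hlog : log (logDampedInvPow N c r) = log c - N * log r - log (1 + log r ^ 2) := by
    rw [logDampedInvPow, log_div (by positivity) (by positivity), log_mul hc.ne' (by positivity),
      log_rpow hr]
    ring
  have hpos : 0 ≤ log (logDampedInvPow N c r) := log_nonneg hφ
  have hupper : log (logDampedInvPow N c r) ≤ -2 * N * log r := by
    have := log_nonneg (by nlinarith [sq_nonneg (log r)] : (1 : ℝ) ≤ 1 + log r ^ 2)
    have := le_abs_self (log c)
    nlinarith
  have hNL : N * log r ≤ -4 := by nlinarith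
  nlinarith [mul_le_mul hupper hupper hpos (by nlinarith),
    mul_nonneg (by linarith : 0 ≤ -(N * log r)) (by linarith : 0 ≤ -(N * log r + 4))]

theorem tendsto_logDampedInvPow_nhdsGT_zero (hN : 1 ≤ N) (hc : 0 < c) :
    Tendsto (logDampedInvPow N c) (𝓝[>] 0) atTop := by
  have hN' : (1 : ℝ) ≤ N := by exact_mod_cast hN
  have hu : Tendsto (fun r => -log r) (𝓝[>] 0) atTop :=
    tendsto_neg_atBot_atTop.comp tendsto_log_nhdsGT_zero
  have hexp : Tendsto (fun u => c / 2 * (exp u / u ^ 2)) atTop atTop :=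
    (tendsto_exp_div_pow_atTop 2).const_mul_atTop (by positivity)
  refine tendsto_atTop_mono' _ ?_ (hexp.comp hu)
  filter_upwards [self_mem_nhdsWithin, hu.eventually_ge_atTop 1] with r (hr : 0 < r) hr1
  have hrpow : r ^ (-(N : ℝ)) = exp (N * -log r) := by
    rw [rpow_def_of_pos hr]; ring_nf
  have hexp_le : exp (-log r) ≤ exp (N * -log r) := exp_le_exp.mpr (by nlinarith)
  simp only [Function.comp, logDampedInvPow, hrpow, ← neg_sq (log r)]
  calc c / 2 * (exp (-log r) / (-log r) ^ 2) = c * exp (-log r) / (2 * (-log r) ^ 2) := by ring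
    _ ≤ c * exp (-log r) / (1 + (-log r) ^ 2) :=
      div_le_div_of_nonneg_left (by positivity) (by positivity) (by nlinarith)
    _ ≤ c * exp (N * -log r) / (1 + (-log r) ^ 2) := by gcongr

theorem pow_mul_le_abs_deriv_logDampedInvPow_mul (hN : 1 ≤ N) (hc : 0 < c) (hr : 0 < r)
    (hr4 : log r ≤ -4) (hrc : |log c| ≤ -log r) (hφ : 2 ≤ logDampedInvPow N c r) {m : ℝ}
    (hm : 0 ≤ m) :
    r ^ (N - 1) * m ≤ 8 * N * c *
      (|-logDampedInvPow N c r * (N * (1 + log r ^ 2) + 2 * log r) / (r * (1 + log r ^ 2))| *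
        (m / (logDampedInvPow N c r ^ 2 * log (logDampedInvPow N c r) ^ 2))) := by
  have hlog_sq := log_sq_logDampedInvPow_le hN hc hr hr4 hrc (by linarith)
  have hc_eq : c = logDampedInvPow N c r * (1 + log r ^ 2) * (r ^ (N - 1) * r) := by
    rw [pow_sub_one_mul (by omega), logDampedInvPow, rpow_neg hr.le, rpow_natCast]
    field_simp
  set P := logDampedInvPow N c r
  set L := log r
  set D := N * (1 + L ^ 2) + 2 * L
  have hℓ : 0 < log P := log_pos (by linarith)
  have hD : 0 < D := by
    have : (0 : ℝ) < N := by exact_mod_cast hN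
    nlinarith [sq_pos_of_pos hℓ]
  rw [neg_mul, neg_div, abs_neg, abs_of_pos (by positivity), hc_eq]
  calc r ^ (N - 1) * m ≤ r ^ (N - 1) * m * (8 * N * D / log P ^ 2) :=
        le_mul_of_one_le_right (by positivity) ((one_le_div (by positivity)).mpr hlog_sq)
    _ = _ := by field_simp

theorem continuousOn_logDampedInvPow : ContinuousOn (logDampedInvPow N c) (Ioi 0) :=
  fun _ hr => (hasDerivAt_logDampedInvPow hr).continuousAt.continuousWithinAt

theorem integrableOn_pow_mul_comp_logDampedInvPow (hN : 1 ≤ N) (hc : 0 < c) {M : ℝ → ℝ}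
    (hM : Continuous M) (hM_nonneg : ∀ t, 0 ≤ t → 0 ≤ M t)
    (hM_int : IntegrableOn (fun t => M t / (t ^ 2 * log t ^ 2)) (Ici 2)) :
    IntegrableOn (fun r => r ^ (N - 1) * M (logDampedInvPow N c r)) (Ioo 0 1) := by
  set φ := logDampedInvPow N c
  set φ' := fun r => -φ r * (N * (1 + log r ^ 2) + 2 * log r) / (r * (1 + log r ^ 2))
  have hcont : ContinuousOn (fun r => r ^ (N - 1) * M (φ r)) (Ioi 0) :=
    (continuousOn_pow _).mul (hM.comp_continuousOn continuousOn_logDampedInvPow)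
  have hneg_log : Tendsto (fun r => -log r) (𝓝[>] 0) atTop :=
    tendsto_neg_atBot_atTop.comp tendsto_log_nhdsGT_zero
  obtain ⟨ε, hε, hsmall⟩ := mem_nhdsGT_iff_exists_Ioo_subset.mp
    (((tendsto_logDampedInvPow_nhdsGT_zero hN hc).eventually_ge_atTop 2).and
      ((hneg_log.eventually_ge_atTop 4).and (hneg_log.eventually_ge_atTop |log c|)))
  have hnear : IntegrableOn (fun r => r ^ (N - 1) * M (φ r)) (Ioo 0 ε) := by
    have hφ' : ∀ r ∈ Ioo 0 ε, HasDerivAt φ (φ' r) r := fun r hr =>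
      hasDerivAt_logDampedInvPow hr.1
    have hφ'_neg : ∀ r ∈ Ioo 0 ε, φ' r < 0 := by
      intro r hr
      obtain ⟨hφr, hr4, -⟩ := hsmall hr
      have hN' : (1 : ℝ) ≤ N := by exact_mod_cast hN
      have hD : 0 < N * (1 + log r ^ 2) + 2 * log r := by nlinarith
      exact div_neg_of_neg_of_pos (mul_neg_of_neg_of_pos (by linarith) hD)
        (mul_pos hr.1 (by positivity))
    have hanti : StrictAntiOn φ (Ioo 0 ε) :=
      strictAntiOn_of_hasDerivWithinAt_neg (convex_Ioo 0 ε)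
        (continuousOn_logDampedInvPow.mono Ioo_subset_Ioi_self)
        (fun r hr => (hφ' r (interior_subset hr)).hasDerivWithinAt)
        (fun r hr => hφ'_neg r (interior_subset hr))
    refine integrableOn_of_norm_le_abs_deriv_mul_comp measurableSet_Ioo
      (fun r hr => (hφ' r hr).hasDerivWithinAt) hanti.injOn
      (hM_int.mono_set ?_)
      ((hcont.mono Ioo_subset_Ioi_self).aestronglyMeasurable measurableSet_Ioo) (8 * N * c) ?_
    · rintro _ ⟨r, hr, rfl⟩
      exact (hsmall hr).1
    · intro r hr
      obtain ⟨hφr, hr4, hrc⟩ := hsmall hr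
      rw [norm_mul, norm_of_nonneg (pow_nonneg hr.1.le _),
        norm_of_nonneg (hM_nonneg _ (by linarith))]
      exact pow_mul_le_abs_deriv_logDampedInvPow_mul hN hc hr.1 (by linarith) hrc hφr
        (hM_nonneg _ (by linarith))
  have hfar : IntegrableOn (fun r => r ^ (N - 1) * M (φ r)) (Icc ε 1) :=
    (hcont.mono fun r hr => hε.trans_le hr.1).integrableOn_Icc
  refine (hnear.union hfar).mono_set fun r hr => ?_
  rcases lt_or_ge r ε with hrε | hεr
  · exact Or.inl ⟨hr.1, hrε⟩
  · exact Or.inr ⟨hεr, hr.2.le⟩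

end logDampedInvPow

theorem stmt19_general (N : ℕ) (hN : 1 ≤ N) (M : ℝ → ℝ) (hM_smooth : ContDiff ℝ 1 M)
    (hM_mono : MonotoneOn M (Set.Ici 0))
    (hM_nonneg : ∀ t : ℝ, 0 ≤ t → 0 ≤ M t)
    (hM_int : IntegrableOn (fun t : ℝ => M t / (t^2 * (Real.log t)^2)) (Set.Ici 2))
    (g : EuclideanSpace ℝ (Fin N) → ℝ) (hg_meas : Measurable g)
    (hg_nonneg : ∀ x, 0 ≤ g x) (c₀ : ℝ) (hc₀ : 0 < c₀)
    (hg : ∀ x : EuclideanSpace ℝ (Fin N), 0 < ‖x‖ → ‖x‖ < 1 →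
      g x ≤ c₀ * ‖x‖ ^ (-(N : ℝ)) / (1 + (Real.log ‖x‖)^2)) :
    IntegrableOn (fun x => M (g x)) (Metric.ball (0 : EuclideanSpace ℝ (Fin N)) 1) := by
  have : Nonempty (Fin N) := Fin.pos_iff_nonempty.mp hN
  have hM := hM_smooth.continuous
  have hradial : IntegrableOn (fun x : EuclideanSpace ℝ (Fin N) => M (logDampedInvPow N c₀ ‖x‖))
      (Metric.ball 0 1) := by
    rw [integrableOn_fun_norm_addHaar volume (f := fun r => M (logDampedInvPow N c₀ r)),
      finrank_euclideanSpace_fin]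
    simpa only [smul_eq_mul] using
      integrableOn_pow_mul_comp_logDampedInvPow hN hc₀ hM hM_nonneg hM_int
  refine hradial.mono' (hM.measurable.comp hg_meas).aestronglyMeasurable ?_
  filter_upwards [ae_restrict_mem measurableSet_ball, ae_restrict_of_ae (volume.ae_ne 0)]
    with x hx hx0
  have hgx := hg x (norm_pos_iff.mpr hx0) (mem_ball_zero_iff.mp hx)
  rw [norm_of_nonneg (hM_nonneg _ (hg_nonneg x))]
  exact hM_mono (hg_nonneg x) ((hg_nonneg x).trans hgx) hgx

theorem stmt19 (N : ℕ) (hN : 1 ≤ N) (M : ℝ → ℝ) (hM_smooth : ContDiff ℝ 1 M)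
    (hM_mono : MonotoneOn M (Set.Ici 0)) (hM_zero : M 0 = 0)
    (hM_nonneg : ∀ t : ℝ, 0 ≤ t → 0 ≤ M t)
    (hM_int : IntegrableOn (fun t : ℝ => M t / (t^2 * (Real.log t)^2)) (Set.Ici 2))
    (g : EuclideanSpace ℝ (Fin N) → ℝ) (hg_meas : Measurable g)
    (hg_nonneg : ∀ x, 0 ≤ g x) (c₀ : ℝ) (hc₀ : 0 < c₀)
    (hg : ∀ x : EuclideanSpace ℝ (Fin N), 0 < ‖x‖ → ‖x‖ < 1 →
      g x ≤ c₀ * ‖x‖ ^ (-(N : ℝ)) / (1 + (Real.log ‖x‖)^2)) :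
    IntegrableOn (fun x => M (g x)) (Metric.ball (0 : EuclideanSpace ℝ (Fin N)) 1) :=
  stmt19_general N hN M hM_smooth hM_mono hM_nonneg hM_int g hg_meas hg_nonneg c₀ hc₀ hg
end
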